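/- arXiv:2402.19130 — 4 statements merged into one kernel-verified Lean document; each statement's English description precedes it below -/
import Mathlib

section
/- Let u, v ∈ ℂ \ {0} with u ≠ v, and define the 3×3 complex matrices A₀ = I + u·E₁₂, B₀ = I + v·E₁₂, and T with rows (−2u, 0, 0), (1, 0, 0), (1/(2(v−u)), 1, 0). Then α(A₀TA₀) = δ(A₀TA₀) = 3, α(B₀TB₀) = δ(B₀TB₀) = 2, and T satisfies T²(T + 2uI) = 0 with T² ≠ 0 and T(T + 2uI) ≠ 0 (so T is algebraic of degree three). -/
open Matrix

/-- The ascent of a square matrix (viewed as a linear map): the least `n : ℕ` with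
`ker (A ^ n) = ker (A ^ (n+1))`, and `⊤` (i.e. `∞`) if no such `n` exists. -/
noncomputable def ascentM {n : ℕ} (A : Matrix (Fin n) (Fin n) ℂ) : ℕ∞ :=
  sInf (Nat.cast ''
    {m : ℕ | LinearMap.ker (A ^ m).mulVecLin = LinearMap.ker (A ^ (m + 1)).mulVecLin})

/-- The descent of a square matrix (viewed as a linear map): the least `n : ℕ` with
`range (A ^ n) = range (A ^ (n+1))`, and `⊤` (i.e. `∞`) if no such `n` exists. -/
noncomputable def descentM {n : ℕ} (A : Matrix (Fin n) (Fin n) ℂ) : ℕ∞ :=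
  sInf (Nat.cast ''
    {m : ℕ | LinearMap.range (A ^ m).mulVecLin = LinearMap.range (A ^ (m + 1)).mulVecLin})

/-!
Write `E_w = 1 + w • E₁₂`. The matrix `S = E_w T E_w` has zero third column, and its leading
`2 × 2` block has trace `2 (w - u)` and determinant `0`, so `S³ = 2 (w - u) S²`. For `w = u`
this makes `S` nilpotent with `S² ≠ 0`, so its ascent is `3`; for `w = v ≠ u` it gives
`ker S² = ker S³`, while `(v, -1, 0)` lies in `ker S² \ ker S`, so the ascent is `2`.
By rank–nullity the kernel chain and the range chain of a matrix stabilise at the same step,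
so descent equals ascent.
-/

namespace Module.End

variable {K V : Type*} [Field K] [AddCommGroup V] [Module K V] [FiniteDimensional K V]

theorem ker_pow_eq_ker_pow_succ_iff_range (f : End K V) (m : ℕ) :
    LinearMap.ker (f ^ m) = LinearMap.ker (f ^ (m + 1)) ↔
      LinearMap.range (f ^ m) = LinearMap.range (f ^ (m + 1)) := by
  have hker : LinearMap.ker (f ^ m) ≤ LinearMap.ker (f ^ (m + 1)) := by
    rw [pow_succ', mul_eq_comp]; exact LinearMap.ker_le_ker_comp _ _
  have hrange : LinearMap.range (f ^ (m + 1)) ≤ LinearMap.range (f ^ m) := by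
    rw [pow_succ, mul_eq_comp]; exact LinearMap.range_comp_le_range _ _
  have h₁ := LinearMap.finrank_range_add_finrank_ker (f ^ m)
  have h₂ := LinearMap.finrank_range_add_finrank_ker (f ^ (m + 1))
  constructor
  · intro h
    rw [h] at h₁
    exact (Submodule.eq_of_le_of_finrank_le hrange (by omega)).symm
  · intro h
    rw [h] at h₁
    exact Submodule.eq_of_le_of_finrank_le hker (by omega)

end Module.End

section Ascent

variable {n : ℕ} (A : Matrix (Fin n) (Fin n) ℂ)

theorem Matrix.mulVecLin_pow (m : ℕ) : (A ^ m).mulVecLin = A.mulVecLin ^ m := by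
  rw [← toLin'_apply', toLin'_pow, toLin'_apply']

theorem descentM_eq_ascentM : descentM A = ascentM A := by
  simp only [descentM, ascentM, mulVecLin_pow,
    ← Module.End.ker_pow_eq_ker_pow_succ_iff_range]

theorem ascentM_eq_succ {k : ℕ}
    (hstab : LinearMap.ker (A ^ (k + 1)).mulVecLin = LinearMap.ker (A ^ (k + 2)).mulVecLin)
    (hjump : LinearMap.ker (A ^ k).mulVecLin ≠ LinearMap.ker (A ^ (k + 1)).mulVecLin) :
    ascentM A = k + 1 := by
  refine le_antisymm (sInf_le ⟨k + 1, hstab, by push_cast; rfl⟩) (le_sInf ?_)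
  rintro _ ⟨m, hm, rfl⟩
  by_contra! hlt
  simp only [Set.mem_ofPred_eq, mulVecLin_pow] at hm hjump
  have hmk : m ≤ k := by exact_mod_cast Order.le_of_lt_add_one hlt
  apply hjump
  obtain ⟨d, rfl⟩ := Nat.exists_eq_add_of_le hmk
  rw [← Module.End.ker_pow_constant hm d, Module.End.ker_pow_constant hm (d + 1), add_assoc]

theorem ker_pow_ne_ker_pow_succ {k : ℕ} (x : Fin n → ℂ) (hx : A ^ (k + 1) *ᵥ x = 0)
    (hx' : A ^ k *ᵥ x ≠ 0) :
    LinearMap.ker (A ^ k).mulVecLin ≠ LinearMap.ker (A ^ (k + 1)).mulVecLin := by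
  intro h
  exact hx' (h ▸ hx : x ∈ LinearMap.ker (A ^ k).mulVecLin)

theorem ker_pow_eq_ker_pow_succ_of_pow_succ_eq_smul {k : ℕ} {c : ℂ} (hc : c ≠ 0)
    (h : A ^ (k + 1) = c • A ^ k) :
    LinearMap.ker (A ^ k).mulVecLin = LinearMap.ker (A ^ (k + 1)).mulVecLin := by
  rw [h, ← toLin'_apply' (c • _), map_smul, LinearMap.ker_smul _ _ hc, toLin'_apply']

theorem ker_pow_eq_ker_pow_succ_of_pow_eq_zero {k : ℕ} (h : A ^ k = 0) :
    LinearMap.ker (A ^ k).mulVecLin = LinearMap.ker (A ^ (k + 1)).mulVecLin := by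
  rw [pow_succ, h, zero_mul]

end Ascent

def tMat (u c : ℂ) : Matrix (Fin 3) (Fin 3) ℂ := !![-(2 * u), 0, 0; 1, 0, 0; c, 1, 0]

def sandwichTMat (u c w : ℂ) : Matrix (Fin 3) (Fin 3) ℂ :=
  !![w - 2 * u, w * (w - 2 * u), 0; 1, w, 0; c, c * w + 1, 0]

section Computations

variable (u c w : ℂ)

theorem one_add_smul_single_mul_tMat_mul :
    (1 + w • single 0 1 1) * tMat u c * (1 + w • single 0 1 1) = sandwichTMat u c w := by
  ext i j
  fin_cases i <;> fin_cases j <;>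
    simp [tMat, sandwichTMat, mul_apply, Fin.sum_univ_three, one_apply, single] <;> ring

theorem sandwichTMat_pow_three :
    sandwichTMat u c w ^ 3 = (2 * (w - u)) • sandwichTMat u c w ^ 2 := by
  ext i j
  fin_cases i <;> fin_cases j <;>
    simp [sandwichTMat, pow_succ, mul_apply, Fin.sum_univ_three] <;> ring

theorem sandwichTMat_mulVec_eq : sandwichTMat u c w *ᵥ ![w, -1, 0] = ![0, 0, -1] := by
  ext i; fin_cases i <;> simp [sandwichTMat, mulVec, dotProduct, Fin.sum_univ_three]; ring

theorem sandwichTMat_mulVec_eq_zero (t : ℂ) : sandwichTMat u c w *ᵥ ![0, 0, t] = 0 := by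
  ext i; fin_cases i <;> simp [sandwichTMat, mulVec, dotProduct, Fin.sum_univ_three]

theorem sandwichTMat_self_sq_mulVec : sandwichTMat u c u ^ 2 *ᵥ ![1, 0, 0] = ![0, 0, 1] := by
  ext i
  fin_cases i <;>
    simp [sandwichTMat, sq, mulVec, dotProduct, mul_apply, Fin.sum_univ_three] <;> ring

theorem tMat_sq_mul_add_smul_one : tMat u c ^ 2 * (tMat u c + (2 * u) • 1) = 0 := by
  ext i j
  fin_cases i <;> fin_cases j <;>
    simp [tMat, sq, mul_apply, Fin.sum_univ_three, one_apply]

theorem tMat_sq_ne_zero (hu : u ≠ 0) : tMat u c ^ 2 ≠ 0 := by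
  intro h
  simpa [tMat, sq, mul_apply, Fin.sum_univ_three, hu] using congr_fun₂ h 0 0

theorem tMat_mul_add_smul_one_ne_zero : tMat u c * (tMat u c + (2 * u) • 1) ≠ 0 := by
  intro h
  simpa [tMat, mul_apply, Fin.sum_univ_three, one_apply] using congr_fun₂ h 2 0

theorem ascentM_sandwichTMat_self : ascentM (sandwichTMat u c u) = 3 := by
  have hnil : sandwichTMat u c u ^ 3 = 0 := by simp [sandwichTMat_pow_three]
  have hjump := ker_pow_ne_ker_pow_succ (sandwichTMat u c u) (k := 2) ![1, 0, 0] (by simp [hnil])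
    (by simp [sandwichTMat_self_sq_mulVec])
  rw [ascentM_eq_succ _ (ker_pow_eq_ker_pow_succ_of_pow_eq_zero _ hnil) hjump]
  rfl

theorem ascentM_sandwichTMat (hw : w ≠ u) : ascentM (sandwichTMat u c w) = 2 := by
  have hstab := ker_pow_eq_ker_pow_succ_of_pow_succ_eq_smul (sandwichTMat u c w)
    (mul_ne_zero two_ne_zero (sub_ne_zero.mpr hw)) (sandwichTMat_pow_three u c w)
  have hjump := ker_pow_ne_ker_pow_succ (sandwichTMat u c w) (k := 1) ![w, -1, 0]
    (by rw [sq, ← mulVec_mulVec, sandwichTMat_mulVec_eq, sandwichTMat_mulVec_eq_zero])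
    (by simp [sandwichTMat_mulVec_eq])
  rw [ascentM_eq_succ _ hstab hjump]
  rfl

end Computations

theorem ascent_descent_A0_B0_T_general (u v : ℂ) (hu : u ≠ 0) (huv : u ≠ v) :
    let A0 : Matrix (Fin 3) (Fin 3) ℂ := 1 + u • Matrix.single 0 1 1
    let B0 : Matrix (Fin 3) (Fin 3) ℂ := 1 + v • Matrix.single 0 1 1
    let T : Matrix (Fin 3) (Fin 3) ℂ :=
      !![-(2 * u), 0, 0; 1, 0, 0; 1 / (2 * (v - u)), 1, 0]
    ascentM (A0 * T * A0) = 3 ∧ descentM (A0 * T * A0) = 3 ∧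
    ascentM (B0 * T * B0) = 2 ∧ descentM (B0 * T * B0) = 2 ∧
    T ^ 2 * (T + (2 * u) • 1) = 0 ∧ T ^ 2 ≠ 0 ∧ T * (T + (2 * u) • 1) ≠ 0 := by
  intro A0 B0 T
  have hA : A0 * T * A0 = sandwichTMat u (1 / (2 * (v - u))) u :=
    one_add_smul_single_mul_tMat_mul ..
  have hB : B0 * T * B0 = sandwichTMat u (1 / (2 * (v - u))) v :=
    one_add_smul_single_mul_tMat_mul ..
  rw [hA, hB, descentM_eq_ascentM, descentM_eq_ascentM, ascentM_sandwichTMat_self,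
    ascentM_sandwichTMat _ _ _ (Ne.symm huv)]
  exact ⟨rfl, rfl, rfl, rfl, tMat_sq_mul_add_smul_one u _, tMat_sq_ne_zero u _ hu,
    tMat_mul_add_smul_one_ne_zero u _⟩

theorem ascent_descent_A0_B0_T (u v : ℂ) (hu : u ≠ 0) (hv : v ≠ 0) (huv : u ≠ v) :
    let A0 : Matrix (Fin 3) (Fin 3) ℂ := 1 + u • Matrix.single 0 1 1
    let B0 : Matrix (Fin 3) (Fin 3) ℂ := 1 + v • Matrix.single 0 1 1
    let T : Matrix (Fin 3) (Fin 3) ℂ :=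
      !![-(2 * u), 0, 0; 1, 0, 0; 1 / (2 * (v - u)), 1, 0]
    ascentM (A0 * T * A0) = 3 ∧ descentM (A0 * T * A0) = 3 ∧
    ascentM (B0 * T * B0) = 2 ∧ descentM (B0 * T * B0) = 2 ∧
    T ^ 2 * (T + (2 * u) • 1) = 0 ∧ T ^ 2 ≠ 0 ∧ T * (T + (2 * u) • 1) ≠ 0 :=
  ascent_descent_A0_B0_T_general u v hu huv
end

section
/- Let X be a complex Banach space with dim X ≥ 3 and let A ∈ B(X) be an algebraic operator of degree two (i.e., A² = aA + bI for some a, b ∈ ℂ and A is not a scalar multiple of the identity) whose rank is greater than one (the range of A has dimension at least 2). Then there exists an operator N ∈ B(X) such that either α(NAN) = δ(NAN) and α(NAN) ∉ {1, 2}, or α(ANA) = δ(ANA) and α(ANA) ∉ {1, 2}. -/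
/-- The ascent of a bounded linear operator: the least `n : ℕ` with
`ker (T ^ n) = ker (T ^ (n+1))`, and `⊤` (i.e. `∞`) if no such `n` exists. -/
noncomputable def ascent {X : Type*} [NormedAddCommGroup X] [NormedSpace ℂ X]
    (T : X →L[ℂ] X) : ℕ∞ :=
  sInf (Nat.cast '' {m : ℕ | LinearMap.ker ((T ^ m : X →L[ℂ] X) : X →ₗ[ℂ] X) = LinearMap.ker ((T ^ (m + 1) : X →L[ℂ] X) : X →ₗ[ℂ] X)})

/-- The descent of a bounded linear operator: the least `n : ℕ` with
`range (T ^ n) = range (T ^ (n+1))`, and `⊤` (i.e. `∞`) if no such `n` exists. -/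
noncomputable def descent {X : Type*} [NormedAddCommGroup X] [NormedSpace ℂ X]
    (T : X →L[ℂ] X) : ℕ∞ :=
  sInf (Nat.cast '' {m : ℕ | LinearMap.range ((T ^ m : X →L[ℂ] X) : X →ₗ[ℂ] X) = LinearMap.range ((T ^ (m + 1) : X →L[ℂ] X) : X →ₗ[ℂ] X)})

/-!
If `b ≠ 0` then `A` is invertible, and `N = A⁻¹` makes `NAN = A⁻¹` bijective: ascent and descent
are both `0`. If `b = 0`, i.e. `A² = aA`, we prescribe a finite-rank `N` on three independent
vectors (Hahn–Banach) so that `T = NAN` runs through a chain `x ↦ y ↦ z ↦ 0` with `z ≠ 0`. Since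
`range T` is spanned by the images of these three vectors, `T` is nilpotent of index exactly three,
and its ascent and descent both equal `3`. For `a = 0` the chain is `Av₁ ↦ v₁ ↦ Av₂ ↦ 0` with
`Av₁, Av₂` independent; for `a ≠ 0` it is `Aw₂ ↦ z ↦ Aw₁ ↦ 0` where `z = Aw - aw ≠ 0` lies in
`ker A`.
-/

open LinearMap Submodule

namespace Module.End

variable {R M : Type*} [Semiring R] [AddCommMonoid M] [Module R M] {f : Module.End R M} {n : ℕ}

theorem exists_pow_apply_ne_zero (h : f ^ n ≠ 0) : ∃ v, (f ^ n) v ≠ 0 := by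
  by_contra! hv; exact h (LinearMap.ext hv)

theorem isLeast_ker_pow_eq_ker_pow_succ (h : f ^ (n + 1) = 0) (h' : f ^ n ≠ 0) :
    IsLeast {m | ker (f ^ m) = ker (f ^ (m + 1))} (n + 1) := by
  refine ⟨by rw [Set.mem_ofPred, pow_succ f (n + 1), h, zero_mul], fun m hker => ?_⟩
  by_contra! hmn
  obtain ⟨v, hv⟩ := exists_pow_apply_ne_zero h'
  have hmem : (f ^ (n - m)) v ∈ ker (f ^ (m + 1)) := by
    rw [mem_ker, ← mul_apply, ← pow_add, show m + 1 + (n - m) = n + 1 by omega, h,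
      LinearMap.zero_apply]
  rw [← Set.mem_ofPred.mp hker, mem_ker, ← mul_apply, ← pow_add,
    show m + (n - m) = n by omega] at hmem
  exact hv hmem

theorem isLeast_range_pow_eq_range_pow_succ (h : f ^ (n + 1) = 0) (h' : f ^ n ≠ 0) :
    IsLeast {m | range (f ^ m) = range (f ^ (m + 1))} (n + 1) := by
  refine ⟨by rw [Set.mem_ofPred, pow_succ f (n + 1), h, zero_mul], fun m hrange => ?_⟩
  by_contra! hmn
  obtain ⟨v, hv⟩ := exists_pow_apply_ne_zero h'
  obtain ⟨u, hu⟩ : (f ^ m) v ∈ range (f ^ (m + 1)) := hrange ▸ mem_range_self _ v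
  apply hv
  rw [show n = n - m + m by omega, pow_add, mul_apply, ← hu, ← mul_apply, ← pow_add,
    show n - m + (m + 1) = n + 1 by omega, h, LinearMap.zero_apply]

end Module.End

namespace ContinuousLinearMap

section Semiring

variable {R M : Type*} [Semiring R] [TopologicalSpace M] [AddCommMonoid M] [Module R M]

theorem toLinearMap_pow_eq_zero (T : M →L[R] M) {n : ℕ} (h : T ^ n = 0) :
    (T : M →ₗ[R] M) ^ n = 0 := by
  simpa using congr_arg ((↑) : (M →L[R] M) → M →ₗ[R] M) h

theorem toLinearMap_pow_ne_zero (T : M →L[R] M) {n : ℕ} (h : T ^ n ≠ 0) :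
    (T : M →ₗ[R] M) ^ n ≠ 0 := by
  simpa using coe_injective.ne h

variable {S : Set M}

theorem range_mul_mul_le_span_image {N A : M →L[R] M}
    (hN : range (N : M →ₗ[R] M) ≤ span R (N '' S)) :
    range ((N * A * N : M →L[R] M) : M →ₗ[R] M) ≤ span R ((N * A * N) '' S) := by
  rintro _ ⟨v, rfl⟩
  have hv := mem_map_of_mem (f := ((N * A : M →L[R] M) : M →ₗ[R] M)) (hN ⟨v, rfl⟩)
  rw [Submodule.map_span, Set.image_image] at hv
  exact hv

theorem pow_succ_eq_zero_of_range_le_span_image {T : M →L[R] M} {n : ℕ}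
    (hT : range (T : M →ₗ[R] M) ≤ span R (T '' S)) (hS : ∀ x ∈ S, (T ^ (n + 1)) x = 0) :
    T ^ (n + 1) = 0 := by
  have hker : span R (T '' S) ≤ ker ((T ^ n : M →L[R] M) : M →ₗ[R] M) := by
    rw [span_le]
    rintro _ ⟨x, hx, rfl⟩
    simpa only [SetLike.mem_coe, mem_ker, coe_coe, pow_succ,
      mul_apply_eq_comp] using hS x hx
  ext v
  rw [pow_succ, mul_apply_eq_comp]
  exact hker (hT ⟨v, rfl⟩)

theorem pow_three_eq_zero_and_sq_ne_zero_of_chain {T : M →L[R] M}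
    {x y z : M} (hT : range (T : M →ₗ[R] M) ≤ span R (T '' S)) (hS : S ⊆ {x, y, z})
    (hx : T x = y) (hy : T y = z) (hz : T z = 0) (hz₀ : z ≠ 0) : T ^ 3 = 0 ∧ T ^ 2 ≠ 0 := by
  have hT₃ (v : M) : (T ^ 3) v = T (T (T v)) := by
    simp only [pow_apply_eq_iterate, Function.iterate_succ_apply', Function.iterate_zero_apply]
  refine ⟨pow_succ_eq_zero_of_range_le_span_image hT fun s hs => ?_, fun h => hz₀ ?_⟩
  · obtain rfl | rfl | rfl := hS hs <;> simp only [hT₃, hx, hy, hz, map_zero]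
  · simpa [sq, hx, hy] using congr($h x)

end Semiring

section FiniteRank

variable {𝕜 E F : Type*} [RCLike 𝕜] [NormedAddCommGroup E] [NormedSpace 𝕜 E]
  [NormedAddCommGroup F] [NormedSpace 𝕜 F]

theorem exists_apply_eq_of_linearIndependent {ι : Type*} [Finite ι]
    {p : ι → E} (hp : LinearIndependent 𝕜 p) (t : ι → F) :
    ∃ N : E →L[𝕜] F, (∀ i, N (p i) = t i) ∧
      range (N : E →ₗ[𝕜] F) ≤ span 𝕜 (N '' Set.range p) := by
  let W := span 𝕜 (Set.range p)
  have : FiniteDimensional 𝕜 W := FiniteDimensional.span_of_finite 𝕜 (Set.finite_range p)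
  obtain ⟨P, hP⟩ := Submodule.ClosedComplemented.of_finiteDimensional W
  let L : W →L[𝕜] F := LinearMap.toContinuousLinearMap ((Module.Basis.span hp).constr 𝕜 t)
  have hNp : ∀ i, (L.comp P) (p i) = t i := fun i => by
    have hPp : P (p i) = Module.Basis.span hp i :=
      (hP ⟨p i, subset_span ⟨i, rfl⟩⟩).trans (Module.Basis.span_apply hp i).symm
    rw [comp_apply, hPp]
    exact (Module.Basis.span hp).constr_basis 𝕜 t i
  refine ⟨L.comp P, hNp, ?_⟩
  rw [← Set.range_comp, show (L.comp P) ∘ p = t from funext hNp,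
    ← Module.Basis.constr_range (Module.Basis.span hp) 𝕜]
  rintro _ ⟨v, rfl⟩
  exact ⟨P v, rfl⟩

end FiniteRank

end ContinuousLinearMap

theorem IsLeast.sInf_natCast_image_eq {S : Set ℕ} {n : ℕ} (h : IsLeast S n) :
    sInf (Nat.cast '' S : Set ℕ∞) = n :=
  (Nat.mono_cast.map_isLeast h).csInf_eq

section AscentDescent

variable {X : Type*} [NormedAddCommGroup X] [NormedSpace ℂ X] {T : X →L[ℂ] X}

theorem ascent_eq_zero_of_injective (hT : Function.Injective T) : ascent T = 0 := by
  refine IsLeast.sInf_natCast_image_eq ⟨?_, fun m _ => m.zero_le⟩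
  simp [Module.End.one_eq_id, LinearMap.ker_eq_bot.mpr hT]

theorem descent_eq_zero_of_surjective (hT : Function.Surjective T) : descent T = 0 := by
  refine IsLeast.sInf_natCast_image_eq ⟨?_, fun m _ => m.zero_le⟩
  simp [Module.End.one_eq_id, LinearMap.range_eq_top.mpr hT]

theorem ascent_eq_of_pow_eq_zero {n : ℕ} (h : T ^ (n + 1) = 0) (h' : T ^ n ≠ 0) :
    ascent T = (n + 1 : ℕ) := by
  refine IsLeast.sInf_natCast_image_eq ?_
  simpa only [ContinuousLinearMap.toLinearMap_pow] using
    Module.End.isLeast_ker_pow_eq_ker_pow_succ (T.toLinearMap_pow_eq_zero h)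
      (T.toLinearMap_pow_ne_zero h')

theorem descent_eq_of_pow_eq_zero {n : ℕ} (h : T ^ (n + 1) = 0) (h' : T ^ n ≠ 0) :
    descent T = (n + 1 : ℕ) := by
  refine IsLeast.sInf_natCast_image_eq ?_
  simpa only [ContinuousLinearMap.toLinearMap_pow] using
    Module.End.isLeast_range_pow_eq_range_pow_succ (T.toLinearMap_pow_eq_zero h)
      (T.toLinearMap_pow_ne_zero h')

end AscentDescent

theorem LinearMap.exists_linearIndependent_pair_apply {K V W : Type*} [Field K] [AddCommGroup V]
    [Module K V] [AddCommGroup W] [Module K W] {f : V →ₗ[K] W}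
    (h : 2 ≤ Module.rank K (range f)) : ∃ v₁ v₂, LinearIndependent K ![f v₁, f v₂] := by
  have : Nontrivial (range f) := rank_pos_iff_nontrivial.mp (zero_lt_two.trans_le h)
  obtain ⟨⟨_, v₁, rfl⟩, hx⟩ := exists_ne (0 : range f)
  obtain ⟨⟨_, v₂, rfl⟩, hxy⟩ :=
    exists_linearIndependent_pair_of_one_lt_rank (Nat.one_lt_ofNat.trans_le h) hx
  refine ⟨v₁, v₂, ?_⟩
  have hcomp : ![f v₁, f v₂] = (range f).subtype ∘ ![⟨f v₁, v₁, rfl⟩, ⟨f v₂, v₂, rfl⟩] := by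
    ext i
    fin_cases i <;> rfl
  rw [hcomp]
  exact hxy.map' (range f).subtype (ker_subtype _)

theorem LinearIndependent.fin_cons_of_notMem {K V : Type*} [DivisionRing K] [AddCommGroup V]
    [Module K V] {n : ℕ} {v : Fin n → V} (hv : LinearIndependent K v) {W : Submodule K V}
    (hvW : ∀ i, v i ∈ W) {x : V} (hx : x ∉ W) : LinearIndependent K (Fin.cons x v) :=
  linearIndependent_finCons.mpr
    ⟨hv, fun hmem => hx (span_le.mpr (Set.range_subset_iff.mpr hvW) hmem)⟩

theorem isUnit_of_sq_eq_smul_add_smul_one {K R : Type*} [Field K] [Ring R] [Algebra K R] {x : R}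
    {a b : K} (h : x ^ 2 = a • x + b • 1) (hb : b ≠ 0) : IsUnit x := by
  have hb' : b⁻¹ • (x ^ 2 - a • x) = 1 := by
    rw [h, add_sub_cancel_left, smul_smul, inv_mul_cancel₀ hb, one_smul]
  refine isUnit_iff_exists.mpr ⟨b⁻¹ • (x - a • 1), ?_, ?_⟩
  · rw [mul_smul_comm, mul_sub, mul_smul_comm, mul_one, ← sq, hb']
  · rw [smul_mul_assoc, sub_mul, smul_mul_assoc, one_mul, ← sq, hb']

section NilpotentOfIndexThree

variable {𝕜 E : Type*} [RCLike 𝕜] [NormedAddCommGroup E] [NormedSpace 𝕜 E] {A : E →L[𝕜] E}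

theorem exists_mul_mul_pow_three_eq_zero_of_sq_eq_zero (hA : A ^ 2 = 0)
    (hrank : 2 ≤ Module.rank 𝕜 (range (A : E →ₗ[𝕜] E))) :
    ∃ N : E →L[𝕜] E, (N * A * N) ^ 3 = 0 ∧ (N * A * N) ^ 2 ≠ 0 := by
  have hAA (v : E) : A (A v) = 0 := by simpa [sq] using congr($hA v)
  obtain ⟨v₁, v₂, hu⟩ := (A : E →ₗ[𝕜] E).exists_linearIndependent_pair_apply hrank
  simp only [ContinuousLinearMap.coe_coe] at hu
  have hind : LinearIndependent 𝕜 ![v₁, A v₁, A v₂] :=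
    hu.fin_cons_of_notMem (W := ker (A : E →ₗ[𝕜] E)) (by simp [Fin.forall_fin_two, hAA])
      (by simpa using hu.ne_zero 0)
  obtain ⟨N, hNp, hN⟩ :=
    ContinuousLinearMap.exists_apply_eq_of_linearIndependent hind ![v₂, v₁, A v₂]
  have hN₀ : N v₁ = v₂ := hNp 0
  have hN₁ : N (A v₁) = v₁ := hNp 1
  have hN₂ : N (A v₂) = A v₂ := hNp 2
  exact ⟨N, ContinuousLinearMap.pow_three_eq_zero_and_sq_ne_zero_of_chain (x := A v₁) (y := v₁)
    (ContinuousLinearMap.range_mul_mul_le_span_image hN)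
    (Set.range_subset_iff.mpr fun i => by fin_cases i <;> simp)
    (by simp [hN₁]) (by simp [hN₀, hN₂]) (by simp [hN₂, hAA]) (hu.ne_zero 1)⟩

theorem exists_mul_mul_pow_three_eq_zero_of_sq_eq_smul {a : 𝕜} (hA : A ^ 2 = a • A) (ha : a ≠ 0)
    (hAa : A ≠ a • 1) (hrank : 2 ≤ Module.rank 𝕜 (range (A : E →ₗ[𝕜] E))) :
    ∃ N : E →L[𝕜] E, (N * A * N) ^ 3 = 0 ∧ (N * A * N) ^ 2 ≠ 0 := by
  have hAA (v : E) : A (A v) = a • A v := by simpa [sq] using congr($hA v)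
  obtain ⟨w, hw⟩ : ∃ w, A w - a • w ≠ 0 := by
    by_contra! h
    exact hAa (ContinuousLinearMap.ext fun w => by simpa [sub_eq_zero] using h w)
  set z := A w - a • w
  have hAz : A z = 0 := by simp [z, hAA]
  have hz : z ∉ range (A : E →ₗ[𝕜] E) := by
    rintro ⟨y, hy⟩
    have haz : a • z = 0 := by rw [← hAz, ← hy, ContinuousLinearMap.coe_coe, hAA]
    exact hw ((smul_eq_zero.mp haz).resolve_left ha)
  obtain ⟨w₁, w₂, hu⟩ := (A : E →ₗ[𝕜] E).exists_linearIndependent_pair_apply hrank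
  simp only [ContinuousLinearMap.coe_coe] at hu
  have hind : LinearIndependent 𝕜 ![z, A w₁, A w₂] :=
    hu.fin_cons_of_notMem (W := range (A : E →ₗ[𝕜] E)) (by simp [Fin.forall_fin_two]) hz
  obtain ⟨N, hNp, hN⟩ :=
    ContinuousLinearMap.exists_apply_eq_of_linearIndependent hind ![a⁻¹ • A w₂, a⁻¹ • z, A w₁]
  have hN₀ : N z = a⁻¹ • A w₂ := hNp 0
  have hN₁ : N (A w₁) = a⁻¹ • z := hNp 1
  have hN₂ : N (A w₂) = A w₁ := hNp 2
  exact ⟨N, ContinuousLinearMap.pow_three_eq_zero_and_sq_ne_zero_of_chain (x := A w₂) (y := z)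
    (ContinuousLinearMap.range_mul_mul_le_span_image hN)
    (Set.range_subset_iff.mpr fun i => by fin_cases i <;> simp)
    (by simp [hN₂, hAA, hN₁, ha]) (by simp [hN₀, hAA, hN₂, ha]) (by simp [hN₁, hAz])
    (hu.ne_zero 0)⟩

end NilpotentOfIndexThree

theorem exists_N_triple_ascent_not_one_two_general {X : Type*} [NormedAddCommGroup X]
    [NormedSpace ℂ X]
    (A : X →L[ℂ] X) (a b : ℂ) (halg : A ^ 2 = a • A + b • 1)
    (hns : ∀ c : ℂ, A ≠ c • 1)
    (hrank : 2 ≤ Module.rank ℂ (LinearMap.range (A : X →ₗ[ℂ] X))) :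
    ∃ N : X →L[ℂ] X,
      (ascent (N * A * N) = descent (N * A * N) ∧
        ascent (N * A * N) ∉ ({1, 2} : Set ℕ∞)) ∨
      (ascent (A * N * A) = descent (A * N * A) ∧
        ascent (A * N * A) ∉ ({1, 2} : Set ℕ∞)) := by
  rcases eq_or_ne b 0 with rfl | hb
  · rw [zero_smul, add_zero] at halg
    obtain ⟨N, h3, h2⟩ : ∃ N : X →L[ℂ] X, (N * A * N) ^ 3 = 0 ∧ (N * A * N) ^ 2 ≠ 0 := by
      rcases eq_or_ne a 0 with rfl | ha
      · exact exists_mul_mul_pow_three_eq_zero_of_sq_eq_zero (by rwa [zero_smul] at halg) hrank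
      · exact exists_mul_mul_pow_three_eq_zero_of_sq_eq_smul halg ha (hns a) hrank
    refine ⟨N, Or.inl ?_⟩
    rw [ascent_eq_of_pow_eq_zero h3 h2, descent_eq_of_pow_eq_zero h3 h2]
    norm_num
  · obtain ⟨u, rfl⟩ := isUnit_of_sq_eq_smul_add_smul_one halg hb
    have hbij := (ContinuousLinearEquiv.ofUnit u⁻¹).bijective
    refine ⟨↑u⁻¹, Or.inl ?_⟩
    rw [u.inv_mul, one_mul, ascent_eq_zero_of_injective hbij.1,
      descent_eq_zero_of_surjective hbij.2]
    norm_num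

theorem exists_N_triple_ascent_not_one_two {X : Type*} [NormedAddCommGroup X]
    [NormedSpace ℂ X] [CompleteSpace X] (hdim : 3 ≤ Module.rank ℂ X)
    (A : X →L[ℂ] X) (a b : ℂ) (halg : A ^ 2 = a • A + b • 1)
    (hns : ∀ c : ℂ, A ≠ c • 1)
    (hrank : 2 ≤ Module.rank ℂ (LinearMap.range (A : X →ₗ[ℂ] X))) :
    ∃ N : X →L[ℂ] X,
      (ascent (N * A * N) = descent (N * A * N) ∧
        ascent (N * A * N) ∉ ({1, 2} : Set ℕ∞)) ∨
      (ascent (A * N * A) = descent (A * N * A) ∧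
        ascent (A * N * A) ∉ ({1, 2} : Set ℕ∞)) :=
  exists_N_triple_ascent_not_one_two_general A a b halg hns hrank
end

section
/- Let X be a complex Banach space with dim X ≥ 3 and let A ∈ B(X). Then A = 0 if and only if α(ATA) = 1 and α(TAT) = 1 for every T ∈ B(X). -/
/-!
If `v` and `A v` are linearly independent, a continuous functional `f` with `f v = 0` and
`f (A v) = 1` gives the rank-one operator `T = f(·) v` with `T A T = T ≠ 0` and `T² = 0`, so
`ascent (T A T) = 2`. Hence the hypothesis makes `A` locally, and therefore globally, a scalar
`c • 1`; and `ascent (A A) = 1` says that `A²` has a nonzero kernel, forcing `c = 0`.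
-/

theorem SeparatingDual.exists_apply_eq_of_linearIndependent {R V ι : Type*} [Field R]
    [AddCommGroup V] [TopologicalSpace R] [TopologicalSpace V] [IsTopologicalRing R] [Module R V]
    [SeparatingDual R V] [Fintype ι] {v : ι → V} (hv : LinearIndependent R v) (g : ι → R) :
    ∃ f : StrongDual R V, ∀ i, f (v i) = g i := by
  classical
  obtain ⟨f, hf⟩ := (SeparatingDual.dualMap_surjective_iff (R := R)).2
    hv.fintypeLinearCombination_injective (Fintype.linearCombination R g)
  refine ⟨f, fun i => ?_⟩
  simpa using LinearMap.congr_fun hf (Pi.single i 1)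

theorem sInf_natCast_image_eq_one_iff {S : Set ℕ} :
    sInf (Nat.cast '' S : Set ℕ∞) = 1 ↔ 0 ∉ S ∧ 1 ∈ S := by
  constructor
  · intro h
    have h0 : 0 ∉ S := fun h0 => by
      simpa [h] using sInf_le (Set.mem_image_of_mem (Nat.cast : ℕ → ℕ∞) h0)
    refine ⟨h0, ?_⟩
    by_contra h1
    have : (2 : ℕ∞) ≤ sInf (Nat.cast '' S) := by
      refine le_sInf ?_
      rintro _ ⟨m, hm, rfl⟩
      have hm0 : m ≠ 0 := ne_of_mem_of_not_mem hm h0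
      have hm1 : m ≠ 1 := ne_of_mem_of_not_mem hm h1
      exact_mod_cast (by omega : 2 ≤ m)
    simp [h] at this
  · rintro ⟨h0, h1⟩
    refine le_antisymm (sInf_le ⟨1, h1, Nat.cast_one⟩) (le_sInf ?_)
    rintro _ ⟨m, hm, rfl⟩
    exact_mod_cast Nat.one_le_iff_ne_zero.2 (ne_of_mem_of_not_mem hm h0)

section Ascent

variable {X : Type*} [NormedAddCommGroup X] [NormedSpace ℂ X]

theorem ascent_eq_one_iff (T : X →L[ℂ] X) :
    ascent T = 1 ↔ LinearMap.ker (T : X →ₗ[ℂ] X) ≠ ⊥ ∧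
      LinearMap.ker ((T ^ 2 : X →L[ℂ] X) : X →ₗ[ℂ] X) = LinearMap.ker (T : X →ₗ[ℂ] X) := by
  rw [ascent, sInf_natCast_image_eq_one_iff]
  simp [eq_comm, Module.End.one_eq_id]

theorem ascent_zero [Nontrivial X] : ascent (0 : X →L[ℂ] X) = 1 := by
  simp [ascent_eq_one_iff]

theorem ascent_ne_one_of_sq_eq_zero {T : X →L[ℂ] X} (hT : T ≠ 0) (hT2 : T ^ 2 = 0) :
    ascent T ≠ 1 := by
  rw [Ne, ascent_eq_one_iff, hT2]
  rintro ⟨-, hker⟩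
  exact hT (ContinuousLinearMap.coe_injective (LinearMap.ker_eq_top.1 (by simpa using hker.symm)))

theorem exists_ascent_mul_mul_ne_one {A : X →L[ℂ] X} {v : X}
    (hv : LinearIndependent ℂ ![v, A v]) : ∃ T : X →L[ℂ] X, ascent (T * A * T) ≠ 1 := by
  obtain ⟨f, hf⟩ := SeparatingDual.exists_apply_eq_of_linearIndependent hv ![0, 1]
  have hfv : f v = 0 := hf 0
  have hfAv : f (A v) = 1 := hf 1
  set T := f.smulRight v
  have hTAT : T * A * T = T := by
    ext x
    simp [T, hfAv]
  have hT : T ≠ 0 := fun h0 =>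
    hv.ne_zero 0 (by simpa [T, hfAv] using congr($h0 (A v)))
  have hT2 : T ^ 2 = 0 := by
    ext x
    simp [T, pow_two, hfv]
  exact ⟨T, by rw [hTAT]; exact ascent_ne_one_of_sq_eq_zero hT hT2⟩

end Ascent

theorem eq_zero_iff_ascent_triple_eq_one_general {X : Type*} [NormedAddCommGroup X]
    [NormedSpace ℂ X] (hdim : 3 ≤ Module.rank ℂ X)
    (A : X →L[ℂ] X) :
    A = 0 ↔ ∀ T : X →L[ℂ] X, ascent (A * T * A) = 1 ∧ ascent (T * A * T) = 1 := by
  have : Nontrivial X := rank_pos_iff_nontrivial.1 (lt_of_lt_of_le (by norm_num) hdim)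
  refine ⟨by rintro rfl T; simp [ascent_zero], fun h => ?_⟩
  obtain ⟨c, hc⟩ := LinearMap.exists_eq_smul_id_of_forall_notLinearIndependent
    (f := (A : X →ₗ[ℂ] X)) fun v hv => (exists_ascent_mul_mul_ne_one hv).elim fun T hT => hT (h T).2
  obtain ⟨v, hv, hv0⟩ := Submodule.ne_bot_iff _ |>.1 ((ascent_eq_one_iff _).1 (h 1).1).1
  have hc0 : c = 0 := by
    simpa [hc, smul_smul, hv0] using LinearMap.mem_ker.1 hv
  ext x
  simpa [hc0] using LinearMap.congr_fun hc x

theorem eq_zero_iff_ascent_triple_eq_one {X : Type*} [NormedAddCommGroup X]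
    [NormedSpace ℂ X] [CompleteSpace X] (hdim : 3 ≤ Module.rank ℂ X)
    (A : X →L[ℂ] X) :
    A = 0 ↔ ∀ T : X →L[ℂ] X, ascent (A * T * A) = 1 ∧ ascent (T * A * T) = 1 :=
  eq_zero_iff_ascent_triple_eq_one_general hdim A
end

section
/- Let X be a complex Banach space with dim X ≥ 3 and let A ∈ B(X) with A ≠ 0. Then the range of A is one-dimensional if and only if for every T ∈ B(X), α(ATA) ∈ {1, 2} and α(TAT) ∈ {1, 2}. -/
/-!
An operator `N` with `rank N ≤ 1` satisfies `N ^ 2 = c • N`, hence `ker N² = ker N³`, and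
`ker N ≠ 0` once `dim X ≥ 2`: its ascent is `1` or `2`. When `rank A = 1`, both `ATA` and `TAT`
have rank at most one.

Conversely, `ascent M ∈ {1, 2}` means `ker M ≠ 0` and `ker M² = ker M³`, which fails as soon as
`M² z ≠ 0 = M³ z` for some `z`. Taking `T = 1` gives `0 ≠ w ∈ ker A`. If `rank A ≥ 2`, prescribing
`T` on a suitable finite linearly independent family (Hahn–Banach) produces such a chain for `ATA`
or `TAT`. The family depends on whether `A` vanishes on `range A`, or is injective there; in the
injective case, either some `x ∈ range A` has `x, Ax, A²x` independent, or `A` has an eigenvector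
in `range A` (this is where `ℂ` is used).
-/

open Submodule

theorem LinearIndependent.exists_continuousLinearMap_apply_eq {𝕜 E F ι : Type*} [RCLike 𝕜]
    [NormedAddCommGroup E] [NormedSpace 𝕜 E] [NormedAddCommGroup F] [NormedSpace 𝕜 F]
    [Finite ι] {v : ι → E} (hv : LinearIndependent 𝕜 v) (t : ι → F) :
    ∃ T : E →L[𝕜] F, ∀ i, T (v i) = t i := by
  have := Fintype.ofFinite ι
  have : FiniteDimensional 𝕜 (span 𝕜 (Set.range v)) := .span_of_finite 𝕜 (Set.finite_range v)
  let b := Module.Basis.span hv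
  let f : span 𝕜 (Set.range v) →L[𝕜] F := LinearMap.toContinuousLinearMap (b.constr 𝕜 t)
  obtain ⟨T, hT⟩ := f.exist_extension_of_finiteDimensional_range
  refine ⟨T, fun i => ?_⟩
  have h : f (b i) = T (b i) := congr($hT (b i))
  rw [show f (b i) = t i from b.constr_basis 𝕜 t i] at h
  simpa [b, Module.Basis.span_apply] using h.symm

section LinearAlgebra

variable {K V : Type*} [Field K] [AddCommGroup V] [Module K V]

theorem Submodule.exists_mem_notMem_span_singleton {U : Submodule K V}
    (hU : 1 < Module.rank K U) (u : V) : ∃ y ∈ U, y ∉ K ∙ u := by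
  by_contra! h
  exact hU.not_ge ((rank_submodule_le_one_iff' U).2 ⟨u, h⟩)

theorem Module.End.exists_eigenvector_mem_span_pair [IsAlgClosed K] (f : Module.End K V)
    {x : V} (hx : x ≠ 0) (hfx : f (f x) ∈ span K {x, f x}) :
    ∃ e ∈ span K {x, f x}, e ≠ 0 ∧ ∃ μ : K, f e = μ • e := by
  set W := span K {x, f x}
  have hW : ∀ y ∈ W, f y ∈ W := by
    intro y hy
    refine span_induction (fun z hz => ?_) (by simp) (fun _ _ _ _ h₁ h₂ => ?_)
      (fun c _ _ h => ?_) hy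
    · rcases hz with rfl | rfl
      · exact subset_span (by simp)
      · exact hfx
    · simpa using add_mem h₁ h₂
    · simpa using smul_mem W c h
  have : Nontrivial W := ⟨⟨⟨x, subset_span (by simp)⟩, 0, by simpa [Subtype.ext_iff] using hx⟩⟩
  have : FiniteDimensional K W := .span_of_finite K (by simp)
  obtain ⟨μ, hμ⟩ := Module.End.exists_eigenvalue (f.restrict hW)
  obtain ⟨e, he⟩ := hμ.exists_hasEigenvector
  refine ⟨e, e.2, fun h => he.2 (Subtype.ext h), μ, ?_⟩
  simpa [Subtype.ext_iff, LinearMap.restrict_apply] using he.apply_eq_smul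

theorem Module.End.exists_sq_eq_smul_of_rank_le_one (f : Module.End K V) (hf : f.rank ≤ 1) :
    ∃ c : K, f ^ 2 = c • f := by
  obtain ⟨v, hv⟩ := (rank_submodule_le_one_iff' _).1 hf
  obtain ⟨c, hc⟩ := mem_span_singleton.1 (hv (LinearMap.mem_range_self f v))
  refine ⟨c, LinearMap.ext fun x => ?_⟩
  obtain ⟨r, hr⟩ := mem_span_singleton.1 (hv (LinearMap.mem_range_self f x))
  simp [sq, ← hr, hc, smul_comm c r]

theorem Module.End.ker_sq_eq_ker_pow_three_of_rank_le_one (f : Module.End K V)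
    (hf : f.rank ≤ 1) : LinearMap.ker (f ^ 2) = LinearMap.ker (f ^ 3) := by
  obtain ⟨c, hc⟩ := f.exists_sq_eq_smul_of_rank_le_one hf
  have h3 : f ^ 3 = c • f ^ 2 := by rw [pow_succ', hc, mul_smul_comm, ← sq, hc]
  rcases eq_or_ne c 0 with rfl | hc0
  · rw [h3, zero_smul, hc, zero_smul]
  · rw [h3, LinearMap.ker_smul _ _ hc0]

theorem LinearMap.ker_ne_bot_of_rank_lt (f : Module.End K V) (hf : f.rank < Module.rank K V) :
    LinearMap.ker f ≠ ⊥ := fun h =>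
  hf.ne (rank_range_of_injective f (LinearMap.ker_eq_bot.1 h))

theorem Module.End.ker_sq_ne_ker_pow_three {f : Module.End K V} {z : V}
    (h2 : f (f z) ≠ 0) (h3 : f (f (f z)) = 0) :
    LinearMap.ker (f ^ 2) ≠ LinearMap.ker (f ^ 3) := by
  intro h
  have hz : z ∈ LinearMap.ker (f ^ 2) := h ▸ by simpa [pow_succ', sq] using h3
  exact h2 (by simpa [sq] using hz)

theorem Module.End.linearIndependent_of_apply_sq_eq_zero (f : Module.End K V) {s₁ s₂ : V}
    (hs : LinearIndependent K ![f s₁, f s₂]) (h₁ : f (f s₁) = 0) (h₂ : f (f s₂) = 0) :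
    LinearIndependent K ![s₁, f s₁, s₂, f s₂] := by
  rw [Fintype.linearIndependent_iff]
  intro g hg
  simp only [Fin.sum_univ_four, Matrix.cons_val] at hg
  have hfg := congr(f $hg)
  simp only [map_add, map_smul, h₁, h₂, smul_zero, add_zero, map_zero] at hfg
  obtain ⟨hg0, hg2⟩ := LinearIndependent.pair_iff.1 hs _ _ hfg
  simp only [hg0, hg2, zero_smul, zero_add, add_zero] at hg
  obtain ⟨hg1, hg3⟩ := LinearIndependent.pair_iff.1 hs _ _ hg
  intro i
  fin_cases i <;> assumption

end LinearAlgebra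

section Ascent

variable {X : Type*} [NormedAddCommGroup X] [NormedSpace ℂ X]

theorem ascent_le_iff (T : X →L[ℂ] X) (n : ℕ) :
    ascent T ≤ n ↔
      LinearMap.ker ((T : X →ₗ[ℂ] X) ^ n) = LinearMap.ker ((T : X →ₗ[ℂ] X) ^ (n + 1)) := by
  have stable : ∀ m ≤ n,
      LinearMap.ker ((T : X →ₗ[ℂ] X) ^ m) = LinearMap.ker ((T : X →ₗ[ℂ] X) ^ (m + 1)) →
      LinearMap.ker ((T : X →ₗ[ℂ] X) ^ n) = LinearMap.ker ((T : X →ₗ[ℂ] X) ^ (n + 1)) := by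
    intro m hm h
    obtain ⟨k, rfl⟩ := Nat.exists_eq_add_of_le hm
    rw [← Module.End.ker_pow_constant h k, add_assoc, ← Module.End.ker_pow_constant h (k + 1)]
  rw [← ENat.lt_natCast_add_one_iff, ascent, sInf_lt_iff]
  simp only [Set.mem_image, Set.mem_ofPred_eq, ContinuousLinearMap.toLinearMap_pow]
  constructor
  · rintro ⟨_, ⟨m, hm, rfl⟩, hlt⟩
    exact stable m (by exact_mod_cast ENat.natCast_lt_add_one_iff.1 hlt) hm
  · exact fun h => ⟨n, ⟨n, h, rfl⟩, ENat.natCast_lt_add_one_iff.2 le_rfl⟩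

theorem ascent_eq_zero_iff (T : X →L[ℂ] X) :
    ascent T = 0 ↔ LinearMap.ker (T : X →ₗ[ℂ] X) = ⊥ := by
  rw [← nonpos_iff_eq_zero, ← Nat.cast_zero, ascent_le_iff]
  simp [eq_comm, Module.End.one_eq_id]

theorem ascent_mem_one_two_iff (T : X →L[ℂ] X) :
    ascent T ∈ ({1, 2} : Set ℕ∞) ↔
      LinearMap.ker (T : X →ₗ[ℂ] X) ≠ ⊥ ∧
        LinearMap.ker ((T : X →ₗ[ℂ] X) ^ 2) = LinearMap.ker ((T : X →ₗ[ℂ] X) ^ 3) := by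
  rw [Ne, ← ascent_eq_zero_iff, ← ascent_le_iff T 2]
  induction ascent T using ENat.recTopCoe with
  | top => simp
  | coe k =>
    simp only [Set.mem_insert_iff, Set.mem_singleton_iff]
    norm_cast
    omega

theorem ascent_mem_one_two_of_rank_le_one (hX : 2 ≤ Module.rank ℂ X) (N : X →L[ℂ] X)
    (hN : (N : X →ₗ[ℂ] X).rank ≤ 1) : ascent N ∈ ({1, 2} : Set ℕ∞) :=
  (ascent_mem_one_two_iff N).2
    ⟨LinearMap.ker_ne_bot_of_rank_lt _ (hN.trans_lt (Cardinal.one_lt_two.trans_le hX)),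
      Module.End.ker_sq_eq_ker_pow_three_of_rank_le_one _ hN⟩

theorem ascent_notMem_one_two_of_apply {M : X →L[ℂ] X} {z : X} (h2 : M (M z) ≠ 0)
    (h3 : M (M (M z)) = 0) : ascent M ∉ ({1, 2} : Set ℕ∞) := fun h =>
  Module.End.ker_sq_ne_ker_pow_three (f := (M : X →ₗ[ℂ] X)) h2 h3
    ((ascent_mem_one_two_iff M).1 h).2

end Ascent

section Witnesses

variable {X : Type*} [NormedAddCommGroup X] [NormedSpace ℂ X] (A : X →L[ℂ] X)

theorem exists_ascent_mul_mul_notMem_of_apply_sq_eq_zero {s₁ s₂ : X}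
    (hs : LinearIndependent ℂ ![A s₁, A s₂]) (h₁ : A (A s₁) = 0) (h₂ : A (A s₂) = 0) :
    ∃ T : X →L[ℂ] X, ascent (T * A * T) ∉ ({1, 2} : Set ℕ∞) := by
  -- `T * A * T` maps `s₁ ↦ s₂ ↦ A s₂ ↦ 0`.
  obtain ⟨T, hT⟩ := (Module.End.linearIndependent_of_apply_sq_eq_zero (A : X →ₗ[ℂ] X) hs h₁ h₂
    ).exists_continuousLinearMap_apply_eq ![s₁, s₂, s₂, A s₂]
  have hT₀ : T s₁ = s₁ := hT 0
  have hT₁ : T (A s₁) = s₂ := hT 1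
  have hT₂ : T s₂ = s₂ := hT 2
  have hT₃ : T (A s₂) = A s₂ := hT 3
  refine ⟨T, ascent_notMem_one_two_of_apply (z := s₁) ?_ ?_⟩
  · simpa [hT₀, hT₁, hT₂, hT₃] using hs.ne_zero 1
  · simp [hT₀, hT₁, hT₂, hT₃, h₂]

theorem exists_ascent_mul_mul_notMem_of_apply_sq_ne_zero {x y z : X} (hx : A (A x) ≠ 0)
    (hy : A y ≠ 0) (hy' : A (A y) = 0) (hz : A z ∉ ℂ ∙ A (A x)) :
    ∃ T : X →L[ℂ] X, ascent (A * T * A) ∉ ({1, 2} : Set ℕ∞) := by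
  have hind : LinearIndependent ℂ ![A (A x), A z] :=
    (LinearIndependent.pair_iff' hx).2 fun a h => hz (h ▸ smul_mem _ a (mem_span_singleton_self _))
  -- `A * T * A` maps `z ↦ A x ↦ A y ↦ 0`.
  obtain ⟨T, hT⟩ := hind.exists_continuousLinearMap_apply_eq ![y, x]
  have hT₀ : T (A (A x)) = y := hT 0
  have hT₁ : T (A z) = x := hT 1
  refine ⟨T, ascent_notMem_one_two_of_apply (z := z) ?_ ?_⟩
  · simpa [hT₀, hT₁] using hy
  · simp [hT₀, hT₁, hy']

theorem exists_ascent_mul_mul_notMem_of_linearIndependent {w x : X}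
    (hwA : w ∉ LinearMap.range (A : X →ₗ[ℂ] X)) (hxA : x ∈ LinearMap.range (A : X →ₗ[ℂ] X))
    (hx : LinearIndependent ℂ ![A (A x), x, A x]) :
    ∃ T : X →L[ℂ] X, ascent (T * A * T) ∉ ({1, 2} : Set ℕ∞) := by
  have hspan : span ℂ (Set.range ![A (A x), x, A x]) ≤ LinearMap.range (A : X →ₗ[ℂ] X) := by
    rw [span_le]
    rintro _ ⟨i, rfl⟩
    fin_cases i
    · exact LinearMap.mem_range_self _ (A x)
    · exact hxA
    · exact LinearMap.mem_range_self _ x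
  have hind : LinearIndependent ℂ ![w, A (A x), x, A x] :=
    linearIndependent_finCons.2 ⟨hx, fun h => hwA (hspan h)⟩
  -- `T * A * T` maps `x ↦ A x ↦ w ↦ 0`.
  obtain ⟨T, hT⟩ := hind.exists_continuousLinearMap_apply_eq ![0, w, x, A x]
  have hT₀ : T w = 0 := hT 0
  have hT₁ : T (A (A x)) = w := hT 1
  have hT₂ : T x = x := hT 2
  have hT₃ : T (A x) = A x := hT 3
  refine ⟨T, ascent_notMem_one_two_of_apply (z := x) ?_ ?_⟩
  · simpa [hT₁, hT₂, hT₃] using hind.ne_zero 0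
  · simp [hT₀, hT₁, hT₂, hT₃]

theorem exists_ascent_mul_mul_notMem_of_eigenvector {w e p : X} {μ : ℂ} (hw : A w = 0)
    (hwA : w ∉ LinearMap.range (A : X →ₗ[ℂ] X)) (heA : e ∈ LinearMap.range (A : X →ₗ[ℂ] X))
    (he : e ≠ 0) (hμ : μ ≠ 0) (hAe : A e = μ • e) (hp : A p ∉ ℂ ∙ e) :
    ∃ T : X →L[ℂ] X, ascent (T * A * T) ∉ ({1, 2} : Set ℕ∞) := by
  have hpair : LinearIndependent ℂ ![e, A p] :=
    (LinearIndependent.pair_iff' he).2 fun a h => hp (h ▸ smul_mem _ a (mem_span_singleton_self _))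
  have hspan : span ℂ (Set.range ![e, A p]) ≤ LinearMap.range (A : X →ₗ[ℂ] X) := by
    rw [span_le]
    rintro _ ⟨i, rfl⟩
    fin_cases i
    · exact heA
    · exact LinearMap.mem_range_self _ p
  have hind : LinearIndependent ℂ ![w, e, A p] :=
    linearIndependent_finCons.2 ⟨hpair, fun h => hwA (hspan h)⟩
  -- `T * A * T` maps `A p ↦ μ • w ↦ μ • e ↦ 0`.
  obtain ⟨T, hT⟩ := hind.exists_continuousLinearMap_apply_eq ![p, w, e]
  have hT₀ : T w = p := hT 0
  have hT₁ : T e = w := hT 1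
  have hT₂ : T (A p) = e := hT 2
  refine ⟨T, ascent_notMem_one_two_of_apply (z := A p) ?_ ?_⟩
  · simpa [hT₀, hT₁, hT₂, hAe, hμ] using he
  · simp [hT₀, hT₁, hT₂, hAe, hw]

theorem exists_ascent_mul_mul_notMem_of_disjoint_range_ker
    (hr : 1 < Module.rank ℂ (LinearMap.range (A : X →ₗ[ℂ] X)))
    (hdisj : Disjoint (LinearMap.range (A : X →ₗ[ℂ] X)) (LinearMap.ker (A : X →ₗ[ℂ] X)))
    {w : X} (hw : A w = 0) (hw0 : w ≠ 0) :
    ∃ T : X →L[ℂ] X, ascent (T * A * T) ∉ ({1, 2} : Set ℕ∞) := by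
  have hinj := disjoint_def.1 hdisj
  have hwA : w ∉ LinearMap.range (A : X →ₗ[ℂ] X) := fun h => hw0 (hinj w h hw)
  obtain ⟨x, hxA, hx⟩ := exists_mem_notMem_span_singleton hr 0
  rw [span_singleton_eq_bot.2 rfl, mem_bot] at hx
  by_cases hAAx : A (A x) ∈ span ℂ {x, A x}
  · obtain ⟨e, heW, he, μ, hAe⟩ :=
      Module.End.exists_eigenvector_mem_span_pair (A : X →ₗ[ℂ] X) hx hAAx
    replace hAe : A e = μ • e := hAe
    have heA : e ∈ LinearMap.range (A : X →ₗ[ℂ] X) := by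
      refine span_le.2 ?_ heW
      rintro _ (rfl | rfl)
      · exact hxA
      · exact LinearMap.mem_range_self _ x
    have hμ : μ ≠ 0 := by
      rintro rfl
      exact he (hinj e heA (by simpa using hAe))
    obtain ⟨p, hpA, hp⟩ := exists_mem_notMem_span_singleton hr e
    refine exists_ascent_mul_mul_notMem_of_eigenvector A hw hwA heA he hμ hAe (p := p)
      fun h => hp ?_
    obtain ⟨c, hc⟩ := mem_span_singleton.1 h
    have hpe : p - (c / μ) • e = 0 := by
      refine hinj _ (sub_mem hpA (smul_mem _ _ heA)) ?_
      change A (p - (c / μ) • e) = 0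
      rw [map_sub, map_smul, hAe, smul_smul, div_mul_cancel₀ _ hμ, hc, sub_self]
    rw [sub_eq_zero.1 hpe]
    exact smul_mem _ _ (mem_span_singleton_self e)
  · have hpair : LinearIndependent ℂ ![x, A x] := by
      refine (LinearIndependent.pair_iff' hx).2 fun a h => hAAx ?_
      rw [← h, map_smul]
      exact smul_mem _ a (subset_span (by simp [h]))
    refine exists_ascent_mul_mul_notMem_of_linearIndependent A hwA hxA
      (linearIndependent_finCons.2 ⟨hpair, ?_⟩)
    rwa [Matrix.range_cons_cons_empty]

theorem exists_not_ascent_mem_of_one_lt_rank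
    (hr : 1 < Module.rank ℂ (LinearMap.range (A : X →ₗ[ℂ] X)))
    (hker : LinearMap.ker (A : X →ₗ[ℂ] X) ≠ ⊥) :
    ∃ T : X →L[ℂ] X,
      ¬ (ascent (A * T * A) ∈ ({1, 2} : Set ℕ∞) ∧ ascent (T * A * T) ∈ ({1, 2} : Set ℕ∞)) := by
  by_cases hdisj : Disjoint (LinearMap.range (A : X →ₗ[ℂ] X)) (LinearMap.ker (A : X →ₗ[ℂ] X))
  · obtain ⟨w, hw, hw0⟩ := (Submodule.ne_bot_iff _).1 hker
    obtain ⟨T, hT⟩ := exists_ascent_mul_mul_notMem_of_disjoint_range_ker A hr hdisj hw hw0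
    exact ⟨T, fun h => hT h.2⟩
  rw [disjoint_def] at hdisj
  push Not at hdisj
  obtain ⟨_, ⟨y, rfl⟩, hAAy, hAy⟩ := hdisj
  by_cases hsq : ∀ x, A (A x) = 0
  · obtain ⟨_, ⟨s₁, rfl⟩, hs₁⟩ := exists_mem_notMem_span_singleton hr 0
    obtain ⟨_, ⟨s₂, rfl⟩, hs₂⟩ := exists_mem_notMem_span_singleton hr (A s₁)
    have hs : LinearIndependent ℂ ![A s₁, A s₂] :=
      (LinearIndependent.pair_iff' (by simpa using hs₁)).2
        fun a h => hs₂ (h ▸ smul_mem _ a (mem_span_singleton_self _))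
    obtain ⟨T, hT⟩ := exists_ascent_mul_mul_notMem_of_apply_sq_eq_zero A hs (hsq s₁) (hsq s₂)
    exact ⟨T, fun h => hT h.2⟩
  · push Not at hsq
    obtain ⟨x, hx⟩ := hsq
    obtain ⟨_, ⟨z, rfl⟩, hz⟩ := exists_mem_notMem_span_singleton hr (A (A x))
    obtain ⟨T, hT⟩ := exists_ascent_mul_mul_notMem_of_apply_sq_ne_zero A hx hAy hAAy hz
    exact ⟨T, fun h => hT h.1⟩

end Witnesses

theorem rank_one_iff_ascent_triple_mem_general {X : Type*} [NormedAddCommGroup X]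
    [NormedSpace ℂ X] (hdim : 3 ≤ Module.rank ℂ X)
    (A : X →L[ℂ] X) (hA : A ≠ 0) :
    Module.rank ℂ (LinearMap.range (A : X →ₗ[ℂ] X)) = 1 ↔
      ∀ T : X →L[ℂ] X,
        ascent (A * T * A) ∈ ({1, 2} : Set ℕ∞) ∧ ascent (T * A * T) ∈ ({1, 2} : Set ℕ∞) := by
  constructor
  · intro hr T
    have hX : 2 ≤ Module.rank ℂ X := le_trans (by norm_num) hdim
    refine ⟨ascent_mem_one_two_of_rank_le_one hX _ ?_, ascent_mem_one_two_of_rank_le_one hX _ ?_⟩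
    · exact (LinearMap.rank_comp_le_left _ _).trans ((LinearMap.rank_comp_le_left _ _).trans hr.le)
    · exact (LinearMap.rank_comp_le_left _ _).trans ((LinearMap.rank_comp_le_right _ _).trans hr.le)
  · intro h
    by_contra hr
    have hker : LinearMap.ker (A : X →ₗ[ℂ] X) ≠ ⊥ :=
      ((ascent_mem_one_two_iff A).1 (by simpa using (h 1).2)).1
    have hr0 : Module.rank ℂ (LinearMap.range (A : X →ₗ[ℂ] X)) ≠ 0 := by
      simpa [Submodule.rank_eq_zero, LinearMap.range_eq_bot,
        ← ContinuousLinearMap.toLinearMap_zero, ContinuousLinearMap.coe_inj] using hA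
    obtain ⟨T, hT⟩ := exists_not_ascent_mem_of_one_lt_rank A
      ((Cardinal.one_le_iff_ne_zero.2 hr0).lt_of_ne' hr) hker
    exact hT (h T)

theorem rank_one_iff_ascent_triple_mem {X : Type*} [NormedAddCommGroup X]
    [NormedSpace ℂ X] [CompleteSpace X] (hdim : 3 ≤ Module.rank ℂ X)
    (A : X →L[ℂ] X) (hA : A ≠ 0) :
    Module.rank ℂ (LinearMap.range (A : X →ₗ[ℂ] X)) = 1 ↔
      ∀ T : X →L[ℂ] X,
        ascent (A * T * A) ∈ ({1, 2} : Set ℕ∞) ∧ ascent (T * A * T) ∈ ({1, 2} : Set ℕ∞) :=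
  rank_one_iff_ascent_triple_mem_general hdim A hA
end
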